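/- Let U be a Hilbert space, Q : U → U* a bounded symmetric operator with closed image, and a ∈ U* nonzero. Then the set L = {(δp, δq) ∈ ℝ² : ∃ v ∈ U, Q v = δp·a and δq = ⟨a, v⟩} is a one-dimensional (Lagrangian) subspace of ℝ². Specifically: if a ∈ im Q then L = span{(1, ⟨a, Q⁻¹a⟩)} (pseudo-inverse), and if a ∉ im Q then L = span{(0, ⟨a, v⟩)} for some v ∈ ker Q with ⟨a,v⟩ ≠ 0. -/

import Mathlib

open Module RealInnerProductSpace

/-- The `L`-derivative subspace for `M = ℝ`:
`L = {(δp, δq) : ∃ v, Q v = δp · a and δq = ⟨a, v⟩} ⊆ ℝ²`. -/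
def Lderiv {U : Type*} [NormedAddCommGroup U] [InnerProductSpace ℝ U]
    (Q : U →L[ℝ] (U →L[ℝ] ℝ)) (a : U →L[ℝ] ℝ) : Submodule ℝ (ℝ × ℝ) where
  carrier := {x | ∃ v : U, Q v = x.1 • a ∧ x.2 = a v}
  add_mem' := by
    rintro ⟨p₁, q₁⟩ ⟨p₂, q₂⟩ ⟨v₁, hv₁, hq₁⟩ ⟨v₂, hv₂, hq₂⟩
    refine ⟨v₁ + v₂, by simp [hv₁, hv₂, add_smul], ?_⟩
    show q₁ + q₂ = a (v₁ + v₂)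
    rw [map_add]
    exact congrArg₂ (· + ·) hq₁ hq₂
  zero_mem' := ⟨0, by simp, by simp⟩
  smul_mem' := by
    rintro c ⟨p, q⟩ ⟨v, hv, hq⟩
    refine ⟨c • v, by simp [hv, smul_smul], ?_⟩
    show c • q = a (c • v)
    rw [map_smul, ← hq]

/-!
If `Q v₀ = a`, symmetry gives `a v = Q v₀ v = Q v v₀ = δp · a v₀` whenever `Q v = δp · a`, so `L`
is spanned by `(1, a v₀)`. If `a ∉ im Q`, then `Q v = δp · a` forces `δp = 0`, so
`L = {0} × a(ker Q)`. This is nonzero: transported to `U` by the Riesz isomorphism, the closed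
subspace `im Q` equals its double orthogonal complement, so some `v` annihilated by all of `im Q`
has `a v ≠ 0`, and by symmetry such a `v` lies in `ker Q`.
-/

theorem exists_forall_mem_apply_eq_zero_and_apply_ne_zero_of_notMem {U : Type*}
    [NormedAddCommGroup U] [InnerProductSpace ℝ U] [CompleteSpace U]
    {F : Submodule ℝ (U →L[ℝ] ℝ)} (hF : IsClosed (F : Set (U →L[ℝ] ℝ)))
    {a : U →L[ℝ] ℝ} (ha : a ∉ F) :
    ∃ v : U, (∀ f ∈ F, f v = 0) ∧ a v ≠ 0 := by
  set D := InnerProductSpace.toDual ℝ U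
  let S : Submodule ℝ U := F.comap D.toLinearEquiv.toLinearMap
  have hS : IsClosed (S : Set U) := hF.preimage D.continuous
  have haS : D.symm a ∉ Sᗮᗮ := by
    rw [Submodule.orthogonal_orthogonal_eq_closure, hS.submodule_topologicalClosure_eq]
    simpa [S] using ha
  obtain ⟨v, hv, hav⟩ : ∃ v ∈ Sᗮ, ⟪v, D.symm a⟫ ≠ 0 := by
    simpa only [Submodule.mem_orthogonal, not_forall, exists_prop] using haS
  refine ⟨v, fun f hf => ?_, ?_⟩
  · simpa [D] using hv (D.symm f) (by simpa [S] using hf)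
  · rwa [real_inner_comm, InnerProductSpace.toDual_symm_apply] at hav

section Lderiv

variable {U : Type*} [NormedAddCommGroup U] [InnerProductSpace ℝ U]
  (Q : U →L[ℝ] (U →L[ℝ] ℝ)) {a : U →L[ℝ] ℝ}

theorem exists_apply_eq_zero_and_apply_ne_zero_of_notMem_range [CompleteSpace U]
    (hQsymm : ∀ x y : U, Q x y = Q y x) (hclosed : IsClosed (Set.range fun v : U => Q v))
    (ha : ¬ ∃ v₀ : U, Q v₀ = a) : ∃ v : U, Q v = 0 ∧ a v ≠ 0 := by
  obtain ⟨v, hv, hav⟩ := exists_forall_mem_apply_eq_zero_and_apply_ne_zero_of_notMem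
    (F := LinearMap.range (Q : U →ₗ[ℝ] U →L[ℝ] ℝ)) hclosed (by simpa using ha)
  refine ⟨v, ?_, hav⟩
  ext u
  rw [hQsymm]
  exact hv (Q u) ⟨u, rfl⟩

theorem Lderiv_eq_span_of_apply_eq (hQsymm : ∀ x y : U, Q x y = Q y x) {v₀ : U}
    (hv₀ : Q v₀ = a) : Lderiv Q a = Submodule.span ℝ {((1 : ℝ), a v₀)} := by
  ext ⟨p, q⟩
  simp only [Submodule.mem_span_singleton, Prod.smul_mk, smul_eq_mul, mul_one, Prod.mk.injEq]
  constructor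
  · rintro ⟨v, hv, rfl : q = a v⟩
    refine ⟨p, rfl, ?_⟩
    calc p * a v₀ = Q v v₀ := by simp [hv]
      _ = a v := by rw [hQsymm, hv₀]
  · rintro ⟨c, rfl, rfl⟩
    exact ⟨c • v₀, by simp [hv₀], by simp⟩

theorem Lderiv_eq_span_of_apply_eq_zero (ha : ¬ ∃ v₀ : U, Q v₀ = a) {v : U} (hv : Q v = 0)
    (hav : a v ≠ 0) : Lderiv Q a = Submodule.span ℝ {((0 : ℝ), a v)} := by
  ext ⟨p, q⟩
  simp only [Submodule.mem_span_singleton, Prod.smul_mk, smul_eq_mul, mul_zero, Prod.mk.injEq]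
  constructor
  · rintro ⟨w, hw, rfl : q = a w⟩
    obtain rfl : p = 0 := by
      by_contra hp
      exact ha ⟨p⁻¹ • w, by simp [hw, smul_smul, inv_mul_cancel₀ hp]⟩
    exact ⟨a w / a v, rfl, div_mul_cancel₀ _ hav⟩
  · rintro ⟨c, rfl, rfl⟩
    exact ⟨c • v, by simp [hv], by simp⟩

end Lderiv

theorem Lderiv_one_dimensional_general {U : Type*}
    [NormedAddCommGroup U] [InnerProductSpace ℝ U] [CompleteSpace U]
    (Q : U →L[ℝ] (U →L[ℝ] ℝ))
    (hQsymm : ∀ x y : U, Q x y = Q y x)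
    (hclosed : IsClosed (Set.range fun v : U => Q v))
    (a : U →L[ℝ] ℝ) :
    finrank ℝ (Lderiv Q a) = 1 ∧
    (∀ v₀ : U, Q v₀ = a →
      Lderiv Q a = Submodule.span ℝ {((1 : ℝ), a v₀)}) ∧
    ((¬ ∃ v₀ : U, Q v₀ = a) →
      ∃ v : U, Q v = 0 ∧ a v ≠ 0 ∧
        Lderiv Q a = Submodule.span ℝ {((0 : ℝ), a v)}) := by
  have hrange (v₀ : U) (hv₀ : Q v₀ = a) := Lderiv_eq_span_of_apply_eq Q hQsymm hv₀
  have hnotRange (ha : ¬ ∃ v₀ : U, Q v₀ = a) :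
      ∃ v : U, Q v = 0 ∧ a v ≠ 0 ∧ Lderiv Q a = Submodule.span ℝ {((0 : ℝ), a v)} := by
    obtain ⟨v, hv, hav⟩ :=
      exists_apply_eq_zero_and_apply_ne_zero_of_notMem_range Q hQsymm hclosed ha
    exact ⟨v, hv, hav, Lderiv_eq_span_of_apply_eq_zero Q ha hv hav⟩
  refine ⟨?_, hrange, hnotRange⟩
  by_cases ha : ∃ v₀ : U, Q v₀ = a
  · obtain ⟨v₀, hv₀⟩ := ha
    rw [hrange v₀ hv₀]
    exact finrank_span_singleton (by simp)
  · obtain ⟨v, -, hav, hL⟩ := hnotRange ha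
    rw [hL]
    exact finrank_span_singleton (by simpa using hav)

/-- if `Q : U → U*` is a bounded symmetric operator with closed
image on a Hilbert space `U` and `a ∈ U*` is nonzero, then `L` is a
one-dimensional (Lagrangian) subspace of `ℝ²`; explicitly,
`L = span {(1, ⟨a, Q⁻¹ a⟩)}` if `a ∈ im Q` and `L = span {(0, ⟨a, v⟩)}` for
some `v ∈ ker Q` with `⟨a, v⟩ ≠ 0` otherwise. -/
theorem Lderiv_one_dimensional {U : Type*}
    [NormedAddCommGroup U] [InnerProductSpace ℝ U] [CompleteSpace U]
    (Q : U →L[ℝ] (U →L[ℝ] ℝ))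
    (hQsymm : ∀ x y : U, Q x y = Q y x)
    (hclosed : IsClosed (Set.range fun v : U => Q v))
    (a : U →L[ℝ] ℝ) (ha : a ≠ 0) :
    finrank ℝ (Lderiv Q a) = 1 ∧
    (∀ v₀ : U, Q v₀ = a →
      Lderiv Q a = Submodule.span ℝ {((1 : ℝ), a v₀)}) ∧
    ((¬ ∃ v₀ : U, Q v₀ = a) →
      ∃ v : U, Q v = 0 ∧ a v ≠ 0 ∧
        Lderiv Q a = Submodule.span ℝ {((0 : ℝ), a v)}) :=
  Lderiv_one_dimensional_general Q hQsymm hclosed a
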